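/- Let C₁ and C₂ be model knot complexes and suppose there exist acyclic complexes A₁ and A₂ together with a bijection between the distinguished bases of C₁ ⊕ A₁ and of C₂ ⊕ A₂ which preserves gr, alg and Alex and whose linear extension commutes with the differentials. Then Υ_{C₁}(t) = Υ_{C₂}(t) for all t ∈ [0,2], and Υ²_{C₁,t}(s) = Υ²_{C₂,t}(s) for all t ∈ (0,2) and s ∈ [0,2]. In particular, Υ and Υ² are invariants of the stable equivalence class of a model knot complex. -/

import Mathlib

open scoped BigOperators

/-- A "pre-complex": a finite distinguished basis `B`, a grading `gr`,
bifiltration functions `alg` and `alex`, and a differential recorded by its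
matrix `d` over the field `F₂ = ZMod 2`:  `∂ x = ∑ y, d x y • y`. -/
structure PreComplex where
  B : Type
  fB : Fintype B
  dB : DecidableEq B
  gr : B → ℤ
  alg : B → ℤ
  alex : B → ℤ
  d : B → B → ZMod 2

attribute [instance] PreComplex.fB PreComplex.dB

namespace PreComplex

variable (C : PreComplex)

/-- Chains: F₂-linear combinations of basis elements. -/
abbrev Chain : Type := C.B → ZMod 2

/-- The boundary of a chain, extending `∂ x = ∑ y, d x y • y` linearly. -/
def bdry (c : C.Chain) : C.Chain := fun y => ∑ x, c x * C.d x y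

/-- A chain is homogeneous of grading `k`. -/
def isGraded (c : C.Chain) (k : ℤ) : Prop := ∀ x, c x ≠ 0 → C.gr x = k

def isCycle (c : C.Chain) : Prop := C.bdry c = 0

def isBoundary (c : C.Chain) : Prop := ∃ w : C.Chain, C.bdry w = c

/-- A cycle of grading 0 representing the nonzero class of `H₀(C)`. -/
def GenCycle (z : C.Chain) : Prop :=
  C.isCycle z ∧ C.isGraded z 0 ∧ ¬ C.isBoundary z

/-- The bifiltration level of a basis element. -/
def lev (x : C.B) : ℤ × ℤ := (C.alg x, C.alex x)

/-- A model knot complex: `∂ ∘ ∂ = 0`; `∂` drops the grading by one and does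
not increase either filtration; the homology is one dimensional, concentrated
in grading 0; and the minimum over cycles representing the generator of
`H₀(C)` of their maximal `alg` (resp. `alex`) filtration level is 0. -/
def IsModel : Prop :=
  (∀ x z, (∑ y, C.d x y * C.d y z) = 0) ∧
  (∀ x y, C.d x y ≠ 0 → C.gr y = C.gr x - 1 ∧ C.alg y ≤ C.alg x ∧ C.alex y ≤ C.alex x) ∧
  (∀ k : ℤ, k ≠ 0 → ∀ z : C.Chain, C.isCycle z → C.isGraded z k → C.isBoundary z) ∧
  (∃ z : C.Chain, C.GenCycle z) ∧
  (∀ z z' : C.Chain, C.GenCycle z → C.GenCycle z' → C.isBoundary (z + z')) ∧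
  (∃ z : C.Chain, C.GenCycle z ∧ ∀ x, z x ≠ 0 → C.alg x ≤ 0) ∧
  (∀ z : C.Chain, C.GenCycle z → ∃ x, z x ≠ 0 ∧ 0 ≤ C.alg x) ∧
  (∃ z : C.Chain, C.GenCycle z ∧ ∀ x, z x ≠ 0 → C.alex x ≤ 0) ∧
  (∀ z : C.Chain, C.GenCycle z → ∃ x, z x ≠ 0 ∧ 0 ≤ C.alex x)

/-- An acyclic complex: conditions (i) and (ii) hold but the homology vanishes. -/
def IsAcyclic : Prop :=
  (∀ x z, (∑ y, C.d x y * C.d y z) = 0) ∧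
  (∀ x y, C.d x y ≠ 0 → C.gr y = C.gr x - 1 ∧ C.alg y ≤ C.alg x ∧ C.alex y ≤ C.alex x) ∧
  (∀ z : C.Chain, C.isCycle z → C.isBoundary z)

end PreComplex

/-- `f_t(i,j) = (t/2)·j + (1 − t/2)·i`. -/
noncomputable def fval (t : ℝ) (p : ℤ × ℤ) : ℝ :=
  (t / 2) * (p.2 : ℝ) + (1 - t / 2) * (p.1 : ℝ)

namespace PreComplex

variable (C : PreComplex)

/-- A chain lies in the subcomplex `F_{t,s}`. -/
def inF (t s : ℝ) (c : C.Chain) : Prop :=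
  ∀ x, c x ≠ 0 → fval t (C.lev x) ≤ s

/-- `γ_C(t)`: the minimal `s` such that `H₀(F_{t,s}) → H₀(C)` is surjective,
i.e. such that `F_{t,s}` contains a cycle representing the generator. -/
noncomputable def gamma (t : ℝ) : ℝ :=
  sInf {s : ℝ | ∃ z : C.Chain, C.GenCycle z ∧ C.inF t s z}

/-- The Upsilon invariant `Υ_C(t) = −2 γ_C(t)`. -/
noncomputable def Upsilon (t : ℝ) : ℝ := -2 * C.gamma t

/-- `P`: the set of bifiltration levels of basis elements. -/
def PSet : Set (ℤ × ℤ) := Set.range C.lev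

/-- `P_u = { p ∈ P : f_u(p) = γ_C(u) }`. -/
def Pt (u : ℝ) : Set (ℤ × ℤ) := {p ∈ C.PSet | fval u p = C.gamma u}

/-- `p` is the negative pivot point of `C` at `t`. -/
def IsNegPivot (t : ℝ) (p : ℤ × ℤ) : Prop :=
  ∃ δ₀ > (0 : ℝ), ∀ δ : ℝ, 0 < δ → δ < δ₀ → C.Pt (t - δ) ∩ C.Pt t = {p}

/-- `p` is the positive pivot point of `C` at `t`. -/
def IsPosPivot (t : ℝ) (p : ℤ × ℤ) : Prop :=
  ∃ δ₀ > (0 : ℝ), ∀ δ : ℝ, 0 < δ → δ < δ₀ → C.Pt (t + δ) ∩ C.Pt t = {p}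

/-- Cycles in `F_{t−δ, γ_C(t−δ)}` representing the nonzero class of `H₀(C)`. -/
def ZminusAt (t δ : ℝ) : Set C.Chain :=
  {z | C.GenCycle z ∧ C.inF (t - δ) (C.gamma (t - δ)) z}

/-- Cycles in `F_{t+δ, γ_C(t+δ)}` representing the nonzero class of `H₀(C)`. -/
def ZplusAt (t δ : ℝ) : Set C.Chain :=
  {z | C.GenCycle z ∧ C.inF (t + δ) (C.gamma (t + δ)) z}

/-- `Z⁻`: the (eventual, for all sufficiently small `δ > 0`) set of cycles in
`F_{t−δ, γ_C(t−δ)}` representing the nonzero class of `H₀(C)`. -/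
def Zminus (t : ℝ) : Set C.Chain :=
  {z | ∃ δ₀ > (0 : ℝ), ∀ δ : ℝ, 0 < δ → δ < δ₀ → z ∈ C.ZminusAt t δ}

/-- `Z⁺`: the (eventual, for all sufficiently small `δ > 0`) set of cycles in
`F_{t+δ, γ_C(t+δ)}` representing the nonzero class of `H₀(C)`. -/
def Zplus (t : ℝ) : Set C.Chain :=
  {z | ∃ δ₀ > (0 : ℝ), ∀ δ : ℝ, 0 < δ → δ < δ₀ → z ∈ C.ZplusAt t δ}

/-- A basis element lies in the subcomplex `F_{t,γ_C(t)} + F_{s,r}`. -/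
def inRegion (t s r : ℝ) (x : C.B) : Prop :=
  fval t (C.lev x) ≤ C.gamma t ∨ fval s (C.lev x) ≤ r

/-- `z` and `z'` represent the same homology class in `H₀(F_{t,γ_C(t)} + F_{s,r})`
(over F₂ the difference `z − z'` is `z + z'`). -/
def sameClass (t s r : ℝ) (z z' : C.Chain) : Prop :=
  (∀ x, z x ≠ 0 → C.inRegion t s r x) ∧
  (∀ x, z' x ≠ 0 → C.inRegion t s r x) ∧
  ∃ w : C.Chain, (∀ x, w x ≠ 0 → C.inRegion t s r x) ∧ C.bdry w = z + z'

/-- The set of `r` for which some `z⁻ ∈ Z⁻` and `z⁺ ∈ Z⁺` represent the same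
class in `H₀(F_{t,γ_C(t)} + F_{s,r})`. -/
def gamma2Set (t s : ℝ) : Set ℝ :=
  {r | ∃ zm ∈ C.Zminus t, ∃ zp ∈ C.Zplus t, C.sameClass t s r zm zp}

/-- `γ²_{C,t}(s)`, as an extended real: the minimum of `gamma2Set`
(`−∞` if the condition holds for every `r`). -/
noncomputable def gamma2 (t s : ℝ) : EReal :=
  sInf ((fun r : ℝ => (r : EReal)) '' C.gamma2Set t s)

/-- `Υ²_{C,t}(s) = −2 (γ²_{C,t}(s) − γ_C(t))`. -/
noncomputable def Upsilon2 (t s : ℝ) : EReal :=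
  (-2 : EReal) * (C.gamma2 t s - (C.gamma t : EReal))

end PreComplex

/-- The jump of the derivative of `f` at `t`: the right-hand derivative minus
the left-hand derivative. -/
noncomputable def derivJump (f : ℝ → ℝ) (t : ℝ) : ℝ :=
  derivWithin f (Set.Ici t) t - derivWithin f (Set.Iic t) t

/-- Direct sum of two pre-complexes. -/
def PreComplex.dsum (C A : PreComplex) : PreComplex where
  B := C.B ⊕ A.B
  fB := inferInstance
  dB := inferInstance
  gr := Sum.elim C.gr A.gr
  alg := Sum.elim C.alg A.alg
  alex := Sum.elim C.alex A.alex
  d := fun x y =>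
    match x, y with
    | Sum.inl x, Sum.inl y => C.d x y
    | Sum.inr x, Sum.inr y => A.d x y
    | _, _ => 0

/-- Tensor product of two pre-complexes. -/
def PreComplex.tensor (C₁ C₂ : PreComplex) : PreComplex where
  B := C₁.B × C₂.B
  fB := inferInstance
  dB := inferInstance
  gr := fun x => C₁.gr x.1 + C₂.gr x.2
  alg := fun x => C₁.alg x.1 + C₂.alg x.2
  alex := fun x => C₁.alex x.1 + C₂.alex x.2
  d := fun x y =>
    (if x.2 = y.2 then C₁.d x.1 y.1 else 0) + (if x.1 = y.1 then C₂.d x.2 y.2 else 0)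

/-- An isomorphism of pre-complexes: a bijection of the distinguished bases
preserving `gr`, `alg`, `alex`, whose linear extension commutes with the
differentials. -/
def PreComplex.Iso (C₁ C₂ : PreComplex) : Prop :=
  ∃ e : C₁.B ≃ C₂.B,
    (∀ x, C₂.gr (e x) = C₁.gr x) ∧
    (∀ x, C₂.alg (e x) = C₁.alg x) ∧
    (∀ x, C₂.alex (e x) = C₁.alex x) ∧
    (∀ x y, C₂.d (e x) (e y) = C₁.d x y)

/-- Stable equivalence of pre-complexes: isomorphism after adding acyclic
summands. -/
def PreComplex.StablyEquiv (C₁ C₂ : PreComplex) : Prop :=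
  ∃ A₁ A₂ : PreComplex, A₁.IsAcyclic ∧ A₂.IsAcyclic ∧ (C₁.dsum A₁).Iso (C₂.dsum A₂)

/-!
Both `Υ` and `Υ²` are defined purely in terms of generator cycles, their supports, and the
filtration levels of those supports. A chain map that sends every basis element of a support to
basis elements of the same grading and level, and generators to generators, therefore carries
each witness for `γ` or `γ²` of one complex to a witness for the other. Such maps exist in both
directions between `C` and `C ⊕ A` (inclusion and projection; the projection keeps generators
because a cycle of the acyclic `A` bounds) and between isomorphic complexes, so the invariants
agree along `C₁ ~ C₁ ⊕ A₁ ≅ C₂ ⊕ A₂ ~ C₂`.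
-/

namespace PreComplex

structure ChainMap (C D : PreComplex) where
  toHom : C.Chain →+ D.Chain
  bdry_map : ∀ c, D.bdry (toHom c) = toHom (C.bdry c)
  exists_source : ∀ c y, toHom c y ≠ 0 → ∃ x, c x ≠ 0 ∧ C.gr x = D.gr y ∧ C.lev x = D.lev y

def ChainMap.PreservesGenerators {C D : PreComplex} (f : C.ChainMap D) : Prop :=
  ∀ z, C.GenCycle z → D.GenCycle (f.toHom z)

def GenEquiv (C D : PreComplex) : Prop :=
  (∃ f : C.ChainMap D, f.PreservesGenerators) ∧ ∃ g : D.ChainMap C, g.PreservesGenerators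

namespace ChainMap

variable {C D : PreComplex} (f : C.ChainMap D)

theorem map_support {P : ℤ × ℤ → Prop} {c : C.Chain} (h : ∀ x, c x ≠ 0 → P (C.lev x)) :
    ∀ y, f.toHom c y ≠ 0 → P (D.lev y) := by
  intro y hy
  obtain ⟨x, hx, -, hlev⟩ := f.exists_source c y hy
  exact hlev ▸ h x hx

theorem inF {t s : ℝ} {c : C.Chain} (h : C.inF t s c) : D.inF t s (f.toHom c) :=
  f.map_support (P := fun p => fval t p ≤ s) h

theorem inRegion {t s r : ℝ} (hγ : C.gamma t = D.gamma t) {c : C.Chain}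
    (h : ∀ x, c x ≠ 0 → C.inRegion t s r x) : ∀ y, f.toHom c y ≠ 0 → D.inRegion t s r y := by
  unfold PreComplex.inRegion at h ⊢
  rw [← hγ]
  exact f.map_support (P := fun p => fval t p ≤ C.gamma t ∨ fval s p ≤ r) h

theorem isCycle {z : C.Chain} (hz : C.isCycle z) : D.isCycle (f.toHom z) := by
  rw [PreComplex.isCycle, f.bdry_map, hz, map_zero]

theorem isGraded {z : C.Chain} {k : ℤ} (hz : C.isGraded z k) : D.isGraded (f.toHom z) k := by
  intro y hy
  obtain ⟨x, hx, hgr, -⟩ := f.exists_source z y hy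
  exact hgr ▸ hz x hx

theorem preservesGenerators_of_leftInverse (g : D.ChainMap C)
    (hgf : ∀ c, g.toHom (f.toHom c) = c) : f.PreservesGenerators := by
  rintro z ⟨hcyc, hgr, hnb⟩
  refine ⟨f.isCycle hcyc, f.isGraded hgr, ?_⟩
  rintro ⟨w, hw⟩
  exact hnb ⟨g.toHom w, by rw [g.bdry_map, hw, hgf]⟩

def comap (φ : D.B → C.B) (hgr : ∀ y, C.gr (φ y) = D.gr y)
    (hlev : ∀ y, C.lev (φ y) = D.lev y) (hbdry : ∀ c, D.bdry (c ∘ φ) = C.bdry c ∘ φ) :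
    C.ChainMap D where
  toHom := { toFun := fun c => c ∘ φ, map_zero' := rfl, map_add' := fun _ _ => rfl }
  bdry_map := hbdry
  exists_source _ y hy := ⟨φ y, hy, hgr y, hlev y⟩

theorem gammaSet_subset (hf : f.PreservesGenerators) (t : ℝ) :
    {s : ℝ | ∃ z : C.Chain, C.GenCycle z ∧ C.inF t s z} ⊆
      {s : ℝ | ∃ z : D.Chain, D.GenCycle z ∧ D.inF t s z} := by
  rintro s ⟨z, hz, hs⟩
  exact ⟨f.toHom z, hf z hz, f.inF hs⟩

theorem genCycle_inF_gamma (hf : f.PreservesGenerators) (hγ : ∀ u, C.gamma u = D.gamma u)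
    {u : ℝ} {z : C.Chain} (hz : C.GenCycle z ∧ C.inF u (C.gamma u) z) :
    D.GenCycle (f.toHom z) ∧ D.inF u (D.gamma u) (f.toHom z) :=
  ⟨hf z hz.1, hγ u ▸ f.inF hz.2⟩

theorem gamma2Set_subset (hf : f.PreservesGenerators) (hγ : ∀ u, C.gamma u = D.gamma u)
    (t s : ℝ) : C.gamma2Set t s ⊆ D.gamma2Set t s := by
  rintro r ⟨zm, ⟨δm, hδm, hzm⟩, zp, ⟨δp, hδp, hzp⟩, hm, hp, w, hw, hbw⟩
  refine ⟨f.toHom zm, ⟨δm, hδm, fun δ h₁ h₂ => f.genCycle_inF_gamma hf hγ (hzm δ h₁ h₂)⟩,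
    f.toHom zp, ⟨δp, hδp, fun δ h₁ h₂ => f.genCycle_inF_gamma hf hγ (hzp δ h₁ h₂)⟩,
    f.inRegion (hγ t) hm, f.inRegion (hγ t) hp, f.toHom w, f.inRegion (hγ t) hw, ?_⟩
  rw [f.bdry_map, hbw, map_add]

end ChainMap

theorem bdry_comp_equiv {C D : PreComplex} (e : C.B ≃ D.B)
    (hd : ∀ x y, D.d (e x) (e y) = C.d x y) (c : D.Chain) : C.bdry (c ∘ e) = D.bdry c ∘ e := by
  funext x
  simp only [bdry, Function.comp_apply, ← hd]
  exact e.sum_comp fun y => c y * D.d y (e x)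

theorem dsum_bdry (C A : PreComplex) (c : (C.dsum A).Chain) :
    (C.dsum A).bdry c = Sum.elim (C.bdry (c ∘ Sum.inl)) (A.bdry (c ∘ Sum.inr)) := by
  funext y
  change (∑ x : C.B ⊕ A.B, c x * (C.dsum A).d x y) = _
  cases y <;> simp [Fintype.sum_sum_type, dsum, bdry] <;> rfl

theorem bdry_zero (C : PreComplex) : C.bdry 0 = 0 := by
  funext y
  simp [bdry]

namespace GenEquiv

variable {C D : PreComplex}

theorem symm (h : C.GenEquiv D) : D.GenEquiv C := ⟨h.2, h.1⟩

theorem gamma_eq (h : C.GenEquiv D) (t : ℝ) : C.gamma t = D.gamma t := by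
  obtain ⟨⟨f, hf⟩, g, hg⟩ := h
  unfold gamma
  rw [(f.gammaSet_subset hf t).antisymm (g.gammaSet_subset hg t)]

theorem upsilon_eq (h : C.GenEquiv D) (t : ℝ) : C.Upsilon t = D.Upsilon t := by
  rw [Upsilon, Upsilon, h.gamma_eq]

theorem upsilon2_eq (h : C.GenEquiv D) (t s : ℝ) : C.Upsilon2 t s = D.Upsilon2 t s := by
  have hγ := h.gamma_eq
  obtain ⟨⟨f, hf⟩, g, hg⟩ := h
  have hγ2 := (f.gamma2Set_subset hf hγ t s).antisymm
    (g.gamma2Set_subset hg (fun u => (hγ u).symm) t s)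
  rw [Upsilon2, Upsilon2, gamma2, gamma2, hγ, hγ2]

end GenEquiv

section Dsum

variable (C A : PreComplex)

def dsumInl : C.ChainMap (C.dsum A) where
  toHom :=
    { toFun := fun c => Sum.elim c 0
      map_zero' := Sum.elim_zero_zero
      map_add' a b :=
        (congrArg (Sum.elim (a + b)) (add_zero (0 : A.Chain)).symm).trans
          (Sum.elim_add_add a b 0 0) }
  bdry_map c := by
    refine (dsum_bdry C A _).trans ?_
    change Sum.elim (C.bdry c) (A.bdry 0) = Sum.elim (C.bdry c) 0
    rw [bdry_zero]
  exists_source c y hy := by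
    cases y with
    | inl x => exact ⟨x, hy, rfl, rfl⟩
    | inr x => exact absurd rfl hy

def dsumProj : (C.dsum A).ChainMap C :=
  ChainMap.comap Sum.inl (fun _ => rfl) (fun _ => rfl) fun c =>
    funext fun y => (congrFun (dsum_bdry C A c) (Sum.inl y)).symm

theorem dsumInl_preservesGenerators : (dsumInl C A).PreservesGenerators :=
  (dsumInl C A).preservesGenerators_of_leftInverse (dsumProj C A) fun _ => rfl

variable {C A}

theorem dsumProj_preservesGenerators (hA : A.IsAcyclic) : (dsumProj C A).PreservesGenerators := by
  rintro z hz
  refine ⟨(dsumProj C A).isCycle hz.1, (dsumProj C A).isGraded hz.2.1, ?_⟩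
  rintro ⟨w, hw⟩
  have hcyc : A.isCycle (z ∘ Sum.inr) :=
    funext fun y => (congrFun (dsum_bdry C A z) (Sum.inr y)).symm.trans (congrFun hz.1 (Sum.inr y))
  obtain ⟨v, hv⟩ := hA.2.2 _ hcyc
  refine hz.2.2 ⟨Sum.elim w v, (dsum_bdry C A _).trans ?_⟩
  change Sum.elim (C.bdry w) (A.bdry v) = z
  rw [hw, hv]
  exact Sum.elim_comp_inl_inr z

theorem genEquiv_dsum (hA : A.IsAcyclic) : C.GenEquiv (C.dsum A) :=
  ⟨⟨dsumInl C A, dsumInl_preservesGenerators C A⟩, dsumProj C A, dsumProj_preservesGenerators hA⟩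

end Dsum

theorem Iso.genEquiv {C D : PreComplex} (h : C.Iso D) : C.GenEquiv D := by
  obtain ⟨e, hgr, halg, halex, hd⟩ := h
  have hlev (x : C.B) : D.lev (e x) = C.lev x := Prod.ext (halg x) (halex x)
  let f : C.ChainMap D :=
    ChainMap.comap e.symm (fun y => by rw [← hgr, e.apply_symm_apply])
      (fun y => by rw [← hlev, e.apply_symm_apply])
      (bdry_comp_equiv e.symm fun x y => by rw [← hd, e.apply_symm_apply, e.apply_symm_apply])
  let g : D.ChainMap C := ChainMap.comap e hgr hlev (bdry_comp_equiv e hd)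
  refine ⟨⟨f, f.preservesGenerators_of_leftInverse g fun c => ?_⟩,
    g, g.preservesGenerators_of_leftInverse f fun c => ?_⟩
  · exact funext fun x => congrArg c (e.symm_apply_apply x)
  · exact funext fun y => congrArg c (e.apply_symm_apply y)

end PreComplex

theorem stable_equivalence_invariance_general (C₁ C₂ A₁ A₂ : PreComplex)
    (hA₁ : A₁.IsAcyclic) (hA₂ : A₂.IsAcyclic)
    (hiso : (C₁.dsum A₁).Iso (C₂.dsum A₂)) :
    (∀ t ∈ Set.Icc (0 : ℝ) 2, C₁.Upsilon t = C₂.Upsilon t) ∧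
    (∀ t ∈ Set.Ioo (0 : ℝ) 2, ∀ s ∈ Set.Icc (0 : ℝ) 2,
        C₁.Upsilon2 t s = C₂.Upsilon2 t s) := by
  have h₁ := PreComplex.genEquiv_dsum (C := C₁) hA₁
  have h₂ := (PreComplex.genEquiv_dsum (C := C₂) hA₂).symm
  refine ⟨fun t _ => ?_, fun t _ s _ => ?_⟩
  · rw [h₁.upsilon_eq, hiso.genEquiv.upsilon_eq, h₂.upsilon_eq]
  · rw [h₁.upsilon2_eq, hiso.genEquiv.upsilon2_eq, h₂.upsilon2_eq]

/-- if `C₁ ⊕ A₁ ≅ C₂ ⊕ A₂` with `A₁, A₂` acyclic, then `C₁` and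
`C₂` have the same `Υ` and `Υ²`; i.e. `Υ` and `Υ²` are invariants of the
stable equivalence class of a model knot complex. -/
theorem stable_equivalence_invariance (C₁ C₂ A₁ A₂ : PreComplex)
    (hC₁ : C₁.IsModel) (hC₂ : C₂.IsModel)
    (hA₁ : A₁.IsAcyclic) (hA₂ : A₂.IsAcyclic)
    (hiso : (C₁.dsum A₁).Iso (C₂.dsum A₂)) :
    (∀ t ∈ Set.Icc (0 : ℝ) 2, C₁.Upsilon t = C₂.Upsilon t) ∧
    (∀ t ∈ Set.Ioo (0 : ℝ) 2, ∀ s ∈ Set.Icc (0 : ℝ) 2,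
        C₁.Upsilon2 t s = C₂.Upsilon2 t s) :=
  stable_equivalence_invariance_general C₁ C₂ A₁ A₂ hA₁ hA₂ hiso
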